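/- For γ ∈ (0,1), the Sibuya probability mass function satisfies f_γ(k) ~ (1/π) sin(γπ) Γ(1+γ) k^{-(γ+1)} as k → ∞; in particular the Sibuya distribution with parameter γ ∈ (0,1) has infinite mean. -/

import Mathlib

open Real Filter Topology

/-- The Sibuya probability mass function: `f_γ(k) = (γ/k!) ∏_{j=1}^{k-1} (j-γ)`. -/
noncomputable def sibuya (γ : ℝ) (k : ℕ) : ℝ :=
  γ / (Nat.factorial k) * ∏ j ∈ Finset.Icc 1 (k - 1), ((j : ℝ) - γ)

/-!
Up to the factor `γ / k!`, the product in `f_γ(k)` is a rising factorial of `1 - γ`, so Euler's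
limit formula `Γ(s) = lim n^s n! / (s (s+1) ⋯ (s+n))` gives `f_γ(k) ~ γ k^{-(γ+1)} / Γ(1-γ)`,
and the reflection formula turns `γ / Γ(1-γ)` into `sin(γπ) Γ(1+γ) / π`.
Then `k f_γ(k) ~ c k^{-γ}` with `γ < 1`, which is not summable.
-/

open Finset Asymptotics
open scoped Nat

lemma prod_Icc_natCast_sub_eq_prod_range (γ : ℝ) (m : ℕ) :
    ∏ j ∈ Icc 1 m, ((j : ℝ) - γ) = ∏ j ∈ range m, ((1 - γ) + j) := by
  rw [← Ico_add_one_right_eq_Icc, prod_Ico_eq_prod_range]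
  exact prod_congr rfl fun j _ => by push_cast; ring

lemma prod_range_mul_GammaSeq {s : ℝ} (hs : 0 < s) (n : ℕ) :
    (∏ j ∈ range (n + 1), (s + j)) * GammaSeq s n = n ^ s * n ! := by
  have hprod : ∏ j ∈ range (n + 1), (s + j) ≠ 0 :=
    prod_ne_zero_iff.mpr fun j _ => by positivity
  rw [GammaSeq, mul_div_cancel₀ _ hprod]

lemma GammaSeq_pos {s : ℝ} (hs : 0 < s) {n : ℕ} (hn : n ≠ 0) : 0 < GammaSeq s n := by
  rw [GammaSeq]; positivity

lemma sibuya_add_two_mul {γ : ℝ} (hγ : γ < 1) (n : ℕ) :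
    sibuya γ (n + 2) * ((n + 2) * (n + 1) * GammaSeq (1 - γ) n) = γ * n ^ (1 - γ) := by
  have hfact : ((n + 2)! : ℝ) = (n + 2) * (n + 1) * n ! := by
    push_cast [Nat.factorial_succ]; ring
  have hn : (n ! : ℝ) ≠ 0 := by positivity
  have hstep : n + 2 - 1 = n + 1 := rfl
  rw [sibuya, hstep, prod_Icc_natCast_sub_eq_prod_range, hfact]
  calc (γ / ((n + 2) * (n + 1) * n !) * ∏ j ∈ range (n + 1), ((1 - γ) + j)) *
        ((n + 2) * (n + 1) * GammaSeq (1 - γ) n)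
      = γ / n ! * ((∏ j ∈ range (n + 1), ((1 - γ) + j)) * GammaSeq (1 - γ) n) := by
        field_simp
    _ = γ * n ^ (1 - γ) := by
        rw [prod_range_mul_GammaSeq (by linarith)]; field_simp

lemma sibuya_add_two_div_rpow_eq {γ : ℝ} (hγ0 : γ ≠ 0) (hγ1 : γ < 1) {n : ℕ} (hn : n ≠ 0) :
    sibuya γ (n + 2) / (γ / Gamma (1 - γ) * ((n + 2 : ℕ) : ℝ) ^ (-(γ + 1))) =
      Gamma (1 - γ) / GammaSeq (1 - γ) n * ((n : ℝ) / (n + 2)) ^ (1 - γ) * (1 + 1 / (n + 1)) := by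
  have hΓ : Gamma (1 - γ) ≠ 0 := (Gamma_pos_of_pos (by linarith)).ne'
  have hG : GammaSeq (1 - γ) n ≠ 0 := (GammaSeq_pos (by linarith) hn).ne'
  have hx : (0 : ℝ) < n + 2 := by positivity
  have hpow : ((n : ℝ) + 2) ^ (-(γ + 1)) = (n + 2) ^ (1 - γ) / (n + 2) ^ 2 := by
    rw [← rpow_two, ← rpow_sub hx]; ring_nf
  have hsib := eq_div_of_mul_eq (by positivity) (sibuya_add_two_mul hγ1 n)
  push_cast
  rw [hsib, hpow, div_rpow (by positivity) hx.le]
  have : ((n : ℝ) + 2) ^ (1 - γ) ≠ 0 := by positivity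
  field_simp
  ring

theorem tendsto_sibuya_div_rpow {γ : ℝ} (hγ0 : γ ≠ 0) (hγ1 : γ < 1) :
    Tendsto (fun k : ℕ => sibuya γ k / (γ / Gamma (1 - γ) * (k : ℝ) ^ (-(γ + 1))))
      atTop (𝓝 1) := by
  have hΓ : Gamma (1 - γ) ≠ 0 := (Gamma_pos_of_pos (by linarith)).ne'
  have hGammaSeq : Tendsto (fun n => Gamma (1 - γ) / GammaSeq (1 - γ) n) atTop (𝓝 1) := by
    have := (tendsto_const_nhds (x := Gamma (1 - γ))).div (GammaSeq_tendsto_Gamma (1 - γ)) hΓ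
    rwa [div_self hΓ] at this
  have hpow : Tendsto (fun n : ℕ => ((n : ℝ) / (n + 2)) ^ (1 - γ)) atTop (𝓝 1) := by
    simpa using (tendsto_natCast_div_add_atTop (2 : ℝ)).rpow_const (Or.inl one_ne_zero)
  have hlin : Tendsto (fun n : ℕ => 1 + 1 / ((n : ℝ) + 1)) atTop (𝓝 1) := by
    simpa using tendsto_const_nhds.add (tendsto_one_div_add_atTop_nhds_zero_nat (𝕜 := ℝ))
  rw [← tendsto_add_atTop_iff_nat 2]
  have hprod := (hGammaSeq.mul hpow).mul hlin
  rw [one_mul, one_mul] at hprod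
  refine hprod.congr' ?_
  filter_upwards [eventually_ne_atTop 0] with n hn
  exact (sibuya_add_two_div_rpow_eq hγ0 hγ1 hn).symm

lemma one_div_pi_mul_sin_mul_Gamma_one_add {γ : ℝ} (hγ : 0 < γ) :
    1 / π * sin (γ * π) * Gamma (1 + γ) = γ / Gamma (1 - γ) := by
  have hrefl := Gamma_mul_Gamma_one_sub γ
  have hΓγ := (Gamma_pos_of_pos hγ).ne'
  rw [add_comm, Gamma_add_one hγ.ne', mul_comm γ π]
  by_cases hsin : sin (π * γ) = 0
  · rw [hsin, div_zero, mul_eq_zero, or_iff_right hΓγ] at hrefl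
    simp [hsin, hrefl]
  · rw [eq_div_iff_mul_eq hsin] at hrefl
    have : Gamma (1 - γ) ≠ 0 := by
      rintro h; rw [h, mul_zero, zero_mul] at hrefl; exact pi_ne_zero hrefl.symm
    field_simp
    linear_combination hrefl

lemma not_summable_of_isEquivalent_rpow {f : ℕ → ℝ} {c p : ℝ} (hc : c ≠ 0) (hp : p ≤ 1)
    (hf : f ~[atTop] fun k => c * (k : ℝ) ^ (-p)) : ¬ Summable f := by
  rw [hf.summable_iff_nat, summable_mul_left_iff hc, summable_nat_rpow]
  linarith

theorem sibuya_tail_asymptotics (γ : ℝ) (hγ : γ ∈ Set.Ioo (0:ℝ) 1) :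
    Tendsto (fun k : ℕ =>
        sibuya γ k / ((1 / π) * Real.sin (γ * π) * Real.Gamma (1 + γ) * (k : ℝ) ^ (-(γ + 1))))
      atTop (𝓝 1) ∧
    ¬ Summable (fun k : ℕ => (k : ℝ) * sibuya γ k) := by
  obtain ⟨h0, h1⟩ := hγ
  have hlim := tendsto_sibuya_div_rpow h0.ne' h1
  have hc : γ / Gamma (1 - γ) ≠ 0 := div_ne_zero h0.ne' (Gamma_pos_of_pos (by linarith)).ne'
  rw [one_div_pi_mul_sin_mul_Gamma_one_add h0]
  refine ⟨hlim, not_summable_of_isEquivalent_rpow hc h1.le ?_⟩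
  refine (IsEquivalent.refl.mul (isEquivalent_of_tendsto_one hlim)).congr_right
    (Eventually.of_forall fun k => ?_)
  have hk : (k : ℝ) ^ (-γ) = (k : ℝ) ^ (-(γ + 1)) * k := by
    rw [← rpow_add_one' k.cast_nonneg (by simpa using h0.ne')]; ring_nf
  simp only [Pi.mul_apply, hk]
  ring
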